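/- Let k > 1/2 be real, ν := (−1 + i·√(4k² − 1))/2 and C_k := −1/(4·sin(νπ)). Let γ : ℝ → ℝ³ be a twice continuously differentiable curve lying on the unit sphere (‖γ(s)‖ = 1 for all s) and parametrized by arc length (‖γ′(s)‖ = 1 for all s). For s ≠ 0 near 0 (so that 0 < ‖γ(0) − γ(s)‖ < 2), define the double-layer kernel f(s) := −C_k · P_ν′( ‖γ(0) − γ(s)‖²/2 − 1 ) · ⟨γ(0) − γ(s), γ′(s) × γ(s)⟩, where P_ν′ is the derivative of P_ν on the real interval (−1, 3). Then lim_{s→0, s≠0} f(s) = −(1/(4π)) · ⟨γ′(0), γ″(0) × γ(0)⟩; i.e., the kernel of the Yukawa–Beltrami double-layer operator extends continuously across the diagonal, with value −(κ/(4π))·⟨t, n_p × x₀⟩ where κ is the curvature, n_p the principal normal, t = γ′(0) the tangent and x₀ = γ(0). -/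

import Mathlib

open Polynomial Filter Topology

/-- The Legendre function of the first kind of degree `ν`, defined by its
hypergeometric series. -/
noncomputable def legendreP (ν : ℂ) (z : ℂ) : ℂ :=
  ∑' n : ℕ, ((ascPochhammer ℂ n).eval (-ν) * (ascPochhammer ℂ n).eval (ν + 1))
      / ((n.factorial : ℂ))^2 * ((1 - z) / 2)^n

/-- The cross product on `EuclideanSpace ℝ (Fin 3)`. -/
noncomputable def cross3 (u v : EuclideanSpace ℝ (Fin 3)) : EuclideanSpace ℝ (Fin 3) :=
  (EuclideanSpace.equiv (Fin 3) ℝ).symm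
    ![u 1 * v 2 - u 2 * v 1, u 2 * v 0 - u 0 * v 2, u 0 * v 1 - u 1 * v 0]

/-!
Write `c n` for the coefficients of the series of `P_ν` and `w = (1 - x) / 2`, so that
`(1 + x) P_ν'(x) = -(1 - w) ∑ (n + 1) c (n + 1) w ^ n`. Comparing `c n` with Euler's sequences
`GammaSeq` gives `n c n → 1 / (Γ(-ν) Γ(ν + 1)) = -sin (νπ) / π` (reflection formula), and Abel's
theorem turns this into `(1 + x) P_ν'(x) → sin (νπ) / π` as `x → -1⁺`.

Along the curve, `1 + x = ‖γ 0 - γ s‖² / 2 ~ s² / 2` because `‖γ' 0‖ = 1`. The numerator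
`⟪γ 0 - γ s, γ' s × γ s⟫` vanishes at `s = 0` and has derivative `⟪γ 0 - γ s, γ'' s × γ s⟫`, so
by L'Hôpital it is `~ -s² ⟪γ' 0, γ'' 0 × γ 0⟫ / 2`. The kernel therefore tends to
`C_k · (sin (νπ) / π) · ⟪γ' 0, γ'' 0 × γ 0⟫ = -⟪γ' 0, γ'' 0 × γ 0⟫ / (4π)`.
-/

open Finset
open scoped Nat RealInnerProductSpace

theorem ascPochhammer_eval_eq_prod_range {R : Type*} [CommSemiring R] (n : ℕ) (r : R) :
    (ascPochhammer R n).eval r = ∏ j ∈ range n, (r + j) := by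
  induction n with
  | zero => simp
  | succ n ih => rw [ascPochhammer_succ_eval, ih, prod_range_succ]

theorem Complex.GammaSeq_eq_ascPochhammer (s : ℂ) (n : ℕ) :
    GammaSeq s n = (n : ℂ) ^ s * n ! / ((ascPochhammer ℂ n).eval s * (s + n)) := by
  rw [GammaSeq, prod_range_succ, ascPochhammer_eval_eq_prod_range]

theorem tendsto_one_sub_mul_tsum_mul_pow {b : ℕ → ℂ} {L : ℂ} (hb : Tendsto b atTop (𝓝 L)) :
    Tendsto (fun x : ℝ => (1 - (x : ℂ)) * ∑' n, b n * (x : ℂ) ^ n) (𝓝[<] 1) (𝓝 L) := by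
  -- Abel's theorem for the differences `d n = b n - b (n - 1)`, whose partial sums are the `b n`.
  set d : ℕ → ℂ := fun n => b n - if n = 0 then 0 else b (n - 1)
  have hpartial : Tendsto (fun n => ∑ i ∈ range n, d i) atTop (𝓝 L) := by
    refine (tendsto_add_atTop_iff_nat 1).mp (hb.congr fun n => ?_)
    induction n with
    | zero => simp [d]
    | succ n ih => rw [sum_range_succ, ← ih]; simp [d]
  obtain ⟨C, hC⟩ := hb.norm.bddAbove_range
  have hsum {z : ℂ} (hz : ‖z‖ < 1) : Summable fun n => b n * z ^ n :=
    .of_norm_bounded ((summable_geometric_of_lt_one (norm_nonneg z) hz).mul_left C) fun n => by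
      rw [norm_mul, norm_pow]
      exact mul_le_mul_of_nonneg_right (hC ⟨n, rfl⟩) (by positivity)
  have hdiff {z : ℂ} (hz : ‖z‖ < 1) : (1 - z) * ∑' n, b n * z ^ n = ∑' n, d n * z ^ n := by
    have hsum' : Summable fun n => (if n = 0 then 0 else b (n - 1)) * z ^ n :=
      (summable_nat_add_iff 1).mp
        (by simpa [pow_succ, mul_comm, mul_left_comm] using (hsum hz).mul_left z)
    have hshift : ∑' n, (if n = 0 then 0 else b (n - 1)) * z ^ n = z * ∑' n, b n * z ^ n := by
      rw [hsum'.tsum_eq_zero_add, ← tsum_mul_left]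
      simp [pow_succ, mul_comm, mul_left_comm]
    rw [sub_mul, one_mul, ← hshift, ← (hsum hz).tsum_sub hsum']
    simp only [d, sub_mul]
  have habel := Complex.tendsto_tsum_powerSeries_nhdsWithin_lt hpartial
  rw [tendsto_map'_iff] at habel
  refine habel.congr' ?_
  filter_upwards [Ioo_mem_nhdsLT (show (-1 : ℝ) < 1 by norm_num)] with x hx
  exact (hdiff (by rwa [Complex.norm_real, Real.norm_eq_abs, abs_lt])).symm

theorem hasDerivAt_tsum_mul_pow {a : ℕ → ℂ} {M : ℝ} (ha : ∀ n : ℕ, ‖(n : ℂ) * a n‖ ≤ M)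
    {w : ℂ} (hw : ‖w‖ < 1) :
    HasDerivAt (fun z => ∑' n, a n * z ^ n) (∑' n, (n + 1) * a (n + 1) * w ^ n) w := by
  obtain ⟨r, hwr, hr₁⟩ := exists_between hw
  have hr₀ : 0 < r := (norm_nonneg w).trans_lt hwr
  have hbound : ∀ n, ∀ y ∈ Metric.ball (0 : ℂ) r,
      ‖a n * (n * y ^ (n - 1))‖ ≤ M * r ^ (n - 1) := by
    intro n y hy
    rw [mem_ball_zero_iff] at hy
    rw [mul_left_comm, ← mul_assoc, norm_mul, norm_pow]
    exact mul_le_mul (ha n) (pow_le_pow_left₀ (norm_nonneg y) hy.le _) (by positivity)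
      ((norm_nonneg _).trans (ha n))
  have hu : Summable fun n => M * r ^ (n - 1) :=
    ((summable_nat_add_iff 1).mp
      (by simpa using summable_geometric_of_lt_one hr₀.le hr₁)).mul_left M
  have hw_mem : w ∈ Metric.ball (0 : ℂ) r := mem_ball_zero_iff.mpr hwr
  have hderiv := hasDerivAt_tsum_of_isPreconnected hu Metric.isOpen_ball
    (convex_ball (0 : ℂ) r).isPreconnected (fun n y _ => (hasDerivAt_pow n y).const_mul (a n))
    hbound (Metric.mem_ball_self hr₀)
    (summable_of_ne_finset_zero (s := {0}) fun n hn => by simp_all) hw_mem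
  rw [(Summable.of_norm_bounded hu fun n => hbound n w hw_mem).tsum_eq_zero_add] at hderiv
  refine hderiv.congr_deriv ?_
  simp only [Nat.cast_zero, zero_mul, mul_zero, zero_add, add_tsub_cancel_right]
  exact tsum_congr fun n => by push_cast; ring

noncomputable def legendreCoeff (ν : ℂ) (n : ℕ) : ℂ :=
  (ascPochhammer ℂ n).eval (-ν) * (ascPochhammer ℂ n).eval (ν + 1) / (n ! : ℂ) ^ 2

theorem legendreP_eq_tsum (ν z : ℂ) :
    legendreP ν z = ∑' n, legendreCoeff ν n * ((1 - z) / 2) ^ n := rfl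

section Legendre

variable {ν : ℂ}

theorem natCast_mul_legendreCoeff_eq_div_GammaSeq (hν : ∀ m : ℤ, ν ≠ m) {n : ℕ} (hn : n ≠ 0) :
    n * legendreCoeff ν n = (n / (n + -ν)) * (n / (n + (ν + 1))) /
      (Complex.GammaSeq (-ν) n * Complex.GammaSeq (ν + 1) n) := by
  have hn' : (n : ℂ) ≠ 0 := Nat.cast_ne_zero.mpr hn
  have h₁ : (n : ℂ) + -ν ≠ 0 := fun h => hν n (by linear_combination -h)
  have h₂ : (n : ℂ) + (ν + 1) ≠ 0 := fun h =>
    hν (-(n + 1 : ℕ)) (by push_cast; linear_combination h)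
  have hP₁ : (ascPochhammer ℂ n).eval (-ν) ≠ 0 := by
    rw [Ne, ascPochhammer_eval_eq_zero_iff]
    rintro ⟨k, -, hk⟩
    exact hν k (by push_cast; linear_combination -hk)
  have hP₂ : (ascPochhammer ℂ n).eval (ν + 1) ≠ 0 := by
    rw [Ne, ascPochhammer_eval_eq_zero_iff]
    rintro ⟨k, -, hk⟩
    exact hν (-(k + 1 : ℕ)) (by push_cast; linear_combination hk)
  have hfac : (n ! : ℂ) ≠ 0 := by exact_mod_cast n.factorial_ne_zero
  have hpow : (n : ℂ) ^ (-ν) * (n : ℂ) ^ (ν + 1) = n := by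
    rw [← Complex.cpow_add _ _ hn', neg_add_cancel_left, Complex.cpow_one]
  have hpow₁ := left_ne_zero_of_mul (hpow ▸ hn')
  have hpow₂ := right_ne_zero_of_mul (hpow ▸ hn')
  rw [Complex.GammaSeq_eq_ascPochhammer, Complex.GammaSeq_eq_ascPochhammer, legendreCoeff,
    add_comm (-ν), add_comm (ν + 1)]
  field_simp
  exact hpow

theorem tendsto_natCast_mul_legendreCoeff (hν : ∀ m : ℤ, ν ≠ m) :
    Tendsto (fun n : ℕ => n * legendreCoeff ν n) atTop
      (𝓝 (-Complex.sin (ν * Real.pi) / Real.pi)) := by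
  have hΓ : Complex.Gamma (-ν) * Complex.Gamma (ν + 1) ≠ 0 := by
    refine mul_ne_zero (Complex.Gamma_ne_zero fun m h => hν m ?_)
      (Complex.Gamma_ne_zero fun m h => hν (-(m + 1 : ℕ)) ?_)
    · linear_combination -h
    · push_cast; linear_combination h
  have hreflection : (Complex.Gamma (-ν) * Complex.Gamma (ν + 1))⁻¹
      = -Complex.sin (ν * Real.pi) / Real.pi := by
    have h := Complex.Gamma_mul_Gamma_one_sub (ν + 1)
    rw [show (1 : ℂ) - (ν + 1) = -ν by ring, mul_add, mul_one, Complex.sin_add_pi, mul_comm _ ν]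
      at h
    rw [mul_comm (Complex.Gamma _), h, inv_div]
  have hGammaSeq := (Complex.GammaSeq_tendsto_Gamma (-ν)).mul
    (Complex.GammaSeq_tendsto_Gamma (ν + 1))
  have hlim := ((tendsto_natCast_div_add_atTop (-ν)).mul
    (tendsto_natCast_div_add_atTop (ν + 1))).div hGammaSeq hΓ
  rw [one_mul, one_div, hreflection] at hlim
  refine hlim.congr' ?_
  filter_upwards [eventually_ne_atTop 0] with n hn
  exact (natCast_mul_legendreCoeff_eq_div_GammaSeq hν hn).symm

theorem hasDerivAt_legendreP (hν : ∀ m : ℤ, ν ≠ m) {x : ℝ} (hx : x ∈ Set.Ioo (-1) 3) :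
    HasDerivAt (fun x : ℝ => legendreP ν x)
      (-(1 / 2) * ∑' n, (n + 1) * legendreCoeff ν (n + 1) * ((1 - x) / 2) ^ n) x := by
  obtain ⟨M, hM⟩ := (tendsto_natCast_mul_legendreCoeff hν).norm.bddAbove_range
  have hw : ‖(1 - (x : ℂ)) / 2‖ < 1 := by
    rw [show (1 - (x : ℂ)) / 2 = ((1 - x) / 2 : ℝ) by push_cast; ring, Complex.norm_real,
      Real.norm_eq_abs, abs_lt]
    constructor <;> linarith [hx.1, hx.2]
  have hinner : HasDerivAt (fun z : ℂ => (1 - z) / 2) (-(1 / 2)) x :=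
    ((hasDerivAt_id _).const_sub 1).div_const 2 |>.congr_deriv (by ring)
  simp only [legendreP_eq_tsum]
  exact ((hasDerivAt_tsum_mul_pow (fun n => hM ⟨n, rfl⟩) hw).comp (x : ℂ) hinner).comp_ofReal
    |>.congr_deriv (mul_comm _ _)

theorem tendsto_one_add_mul_deriv_legendreP (hν : ∀ m : ℤ, ν ≠ m) :
    Tendsto (fun x : ℝ => (1 + x : ℂ) * deriv (fun x : ℝ => legendreP ν x) x) (𝓝[>] (-1))
      (𝓝 (Complex.sin (ν * Real.pi) / Real.pi)) := by
  have hcoeff : Tendsto (fun n : ℕ => (n + 1) * legendreCoeff ν (n + 1)) atTop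
      (𝓝 (-Complex.sin (ν * Real.pi) / Real.pi)) := by
    simpa using (tendsto_add_atTop_iff_nat 1).mpr (tendsto_natCast_mul_legendreCoeff hν)
  have hw : Tendsto (fun x : ℝ => (1 - x) / 2) (𝓝[>] (-1)) (𝓝[<] 1) := by
    have hmaps : Set.MapsTo (fun x : ℝ => (1 - x) / 2) (Set.Ioi (-1)) (Set.Iio 1) :=
      fun x (hx : -1 < x) => show (1 - x) / 2 < 1 by linarith
    convert (by fun_prop : Continuous fun x : ℝ => (1 - x) / 2).continuousWithinAt
      |>.tendsto_nhdsWithin hmaps using 2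
    norm_num
  have hlim := ((tendsto_one_sub_mul_tsum_mul_pow hcoeff).comp hw).neg
  rw [neg_div, neg_neg] at hlim
  refine hlim.congr' ?_
  filter_upwards [Ioo_mem_nhdsGT (show (-1 : ℝ) < 3 by norm_num)] with x hx
  rw [(hasDerivAt_legendreP hν hx).deriv, Function.comp_apply]
  push_cast
  ring

end Legendre

section Chord

variable {E : Type*} [NormedAddCommGroup E] [NormedSpace ℝ E] {γ : ℝ → E} {γ' : E} {a : ℝ}

theorem tendsto_norm_sub_sq_div_sq (h : HasDerivAt γ γ' a) :
    Tendsto (fun s => ‖γ a - γ s‖ ^ 2 / (s - a) ^ 2) (𝓝[≠] a) (𝓝 (‖γ'‖ ^ 2)) := by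
  refine (h.tendsto_slope.norm.pow 2).congr fun s => ?_
  rw [slope_def_module, norm_smul, norm_inv, Real.norm_eq_abs, mul_pow, inv_pow, sq_abs,
    norm_sub_rev, div_eq_inv_mul]

theorem tendsto_norm_sub_sq_nhdsGT (h : HasDerivAt γ γ' a) (hγ' : γ' ≠ 0) :
    Tendsto (fun s => ‖γ a - γ s‖ ^ 2) (𝓝[≠] a) (𝓝[>] 0) := by
  refine tendsto_nhdsWithin_iff.mpr ⟨?_, ?_⟩
  · have hc : ContinuousAt (fun s => ‖γ a - γ s‖ ^ 2) a :=
      (continuousAt_const.sub h.continuousAt).norm.pow 2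
    simpa using hc.tendsto.mono_left nhdsWithin_le_nhds
  · filter_upwards [(tendsto_norm_sub_sq_div_sq h).eventually
      (lt_mem_nhds (pow_pos (norm_pos_iff.mpr hγ') 2 : (0 : ℝ) < ‖γ'‖ ^ 2))] with s hs
    refine Set.mem_Ioi.mpr ((sq_nonneg _).lt_of_ne fun h0 => ?_)
    rw [← h0, zero_div] at hs
    exact lt_irrefl 0 hs

end Chord

theorem cross3_self (u : EuclideanSpace ℝ (Fin 3)) : cross3 u u = 0 := by
  ext i; fin_cases i <;> simp [cross3] <;> ring

theorem inner_self_cross3 (u v : EuclideanSpace ℝ (Fin 3)) : ⟪u, cross3 u v⟫ = 0 := by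
  simp [cross3, PiLp.inner_apply, Fin.sum_univ_three]
  ring

theorem isBilinearMap_cross3 : IsBilinearMap ℝ cross3 where
  add_left u v w := by ext i; fin_cases i <;> simp [cross3] <;> ring
  smul_left c u v := by ext i; fin_cases i <;> simp [cross3] <;> ring
  add_right u v w := by ext i; fin_cases i <;> simp [cross3] <;> ring
  smul_right c u v := by ext i; fin_cases i <;> simp [cross3] <;> ring

section Curve

variable {f g γ γ' γ'' : ℝ → EuclideanSpace ℝ (Fin 3)}

theorem HasDerivAt.cross3 {f' g' : EuclideanSpace ℝ (Fin 3)} {t : ℝ} (hf : HasDerivAt f f' t)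
    (hg : HasDerivAt g g' t) :
    HasDerivAt (fun t => cross3 (f t) (g t)) (cross3 (f t) g' + cross3 f' (g t)) t :=
  isBilinearMap_cross3.toContinuousBilinearMap.hasDerivAt_of_bilinear (fun _ => hf) (fun _ => hg)

theorem ContinuousAt.cross3 {t : ℝ} (hf : ContinuousAt f t) (hg : ContinuousAt g t) :
    ContinuousAt (fun t => cross3 (f t) (g t)) t :=
  (isBilinearMap_cross3.toContinuousBilinearMap.continuous.continuousAt.comp hf).clm_apply hg

theorem hasDerivAt_inner_sub_cross3 (hγ : ∀ s, HasDerivAt γ (γ' s) s)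
    (hγ' : ∀ s, HasDerivAt γ' (γ'' s) s) (a s : ℝ) :
    HasDerivAt (fun s => ⟪γ a - γ s, cross3 (γ' s) (γ s)⟫)
      ⟪γ a - γ s, cross3 (γ'' s) (γ s)⟫ s := by
  refine (((hγ s).const_sub (γ a)).inner ℝ ((hγ' s).cross3 (hγ s))).congr_deriv ?_
  rw [cross3_self, zero_add, inner_neg_left, inner_self_cross3, neg_zero, add_zero]

theorem tendsto_inner_sub_cross3_div_sq (hγ : ∀ s, HasDerivAt γ (γ' s) s)
    (hγ' : ∀ s, HasDerivAt γ' (γ'' s) s) {a : ℝ} (hγ'' : ContinuousAt γ'' a) :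
    Tendsto (fun s => ⟪γ a - γ s, cross3 (γ' s) (γ s)⟫ / (s - a) ^ 2) (𝓝[≠] a)
      (𝓝 (-⟪γ' a, cross3 (γ'' a) (γ a)⟫ / 2)) := by
  have hslope : Tendsto (fun s => (s - a)⁻¹ • (γ a - γ s)) (𝓝[≠] a) (𝓝 (-γ' a)) :=
    (hγ a).tendsto_slope.neg.congr fun s => by rw [slope_def_module, ← smul_neg, neg_sub]
  have hcross : Tendsto (fun s => cross3 (γ'' s) (γ s)) (𝓝[≠] a) (𝓝 (cross3 (γ'' a) (γ a))) :=
    (hγ''.cross3 (hγ a).continuousAt).tendsto.mono_left nhdsWithin_le_nhds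
  refine HasDerivAt.lhopital_zero_nhdsNE
    (.of_forall fun s => hasDerivAt_inner_sub_cross3 hγ hγ' a s)
    (.of_forall fun s => ((hasDerivAt_id s).sub_const a).pow 2) ?_ ?_ ?_ ?_
  · filter_upwards [self_mem_nhdsWithin] with s hs
    simpa [sub_eq_zero] using hs
  · simpa using (hasDerivAt_inner_sub_cross3 hγ hγ' a a).continuousAt.tendsto.mono_left
      nhdsWithin_le_nhds
  · exact ((by fun_prop : Continuous fun s : ℝ => (s - a) ^ 2).tendsto' a 0 (by simp)).mono_left
      nhdsWithin_le_nhds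
  · have h := (hslope.inner (𝕜 := ℝ) hcross).div_const (2 : ℝ)
    rw [inner_neg_left] at h
    refine h.congr' ?_
    filter_upwards [self_mem_nhdsWithin] with s hs
    have : s - a ≠ 0 := sub_ne_zero.mpr hs
    rw [real_inner_smul_left, id_eq]
    field_simp
    ring

end Curve

theorem tendsto_deriv_legendreP_mul_inner_sub_cross3 {ν : ℂ} (hν : ∀ m : ℤ, ν ≠ m)
    {γ : ℝ → EuclideanSpace ℝ (Fin 3)} (hγ : ContDiff ℝ 2 γ) {a : ℝ} (ha : deriv γ a ≠ 0) :
    Tendsto (fun s => deriv (fun x : ℝ => legendreP ν x) (‖γ a - γ s‖ ^ 2 / 2 - 1)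
        * (⟪γ a - γ s, cross3 (deriv γ s) (γ s)⟫ : ℂ)) (𝓝[≠] a)
      (𝓝 (-(Complex.sin (ν * Real.pi) / Real.pi)
        * (⟪deriv γ a, cross3 (deriv (deriv γ) a) (γ a)⟫ / ‖deriv γ a‖ ^ 2 : ℝ))) := by
  obtain ⟨hγ₁, -, hγ'⟩ := contDiff_succ_iff_deriv.mp (show ContDiff ℝ (1 + 1) γ from hγ)
  obtain ⟨hγ₂, -, hγ''⟩ := contDiff_succ_iff_deriv.mp (show ContDiff ℝ (0 + 1) (deriv γ) from hγ')
  have hchord := tendsto_norm_sub_sq_div_sq (hγ₁ a).hasDerivAt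
  have hkernel := tendsto_inner_sub_cross3_div_sq (fun s => (hγ₁ s).hasDerivAt)
    (fun s => (hγ₂ s).hasDerivAt) hγ''.continuous.continuousAt (a := a)
  have hx : Tendsto (fun s => ‖γ a - γ s‖ ^ 2 / 2 - 1) (𝓝[≠] a) (𝓝[>] (-1)) := by
    have hmaps : Set.MapsTo (fun d : ℝ => d / 2 - 1) (Set.Ioi 0) (Set.Ioi (-1)) :=
      fun d (hd : 0 < d) => show -1 < d / 2 - 1 by linarith
    convert ((by fun_prop : Continuous fun d : ℝ => d / 2 - 1).continuousWithinAt
      |>.tendsto_nhdsWithin hmaps).comp (tendsto_norm_sub_sq_nhdsGT (hγ₁ a).hasDerivAt ha)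
      using 2 <;> norm_num
  -- With `x = ‖γ a - γ s‖² / 2 - 1` the kernel is
  -- `2 ((1 + x) P_ν'(x)) · (⟪…⟫ / (s - a)²) / (‖γ a - γ s‖² / (s - a)²)`.
  have hlim := ((tendsto_one_add_mul_deriv_legendreP hν).comp hx).const_mul 2 |>.mul
    ((Complex.continuous_ofReal.tendsto _).comp
      (hkernel.div hchord (pow_ne_zero 2 (norm_ne_zero_iff.mpr ha))))
  convert hlim.congr' ?_ using 2
  · push_cast
    ring
  · filter_upwards [self_mem_nhdsWithin, (tendsto_nhdsWithin_iff.mp hx).2] with s hs hd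
    have hs : (s : ℂ) - a ≠ 0 := sub_ne_zero.mpr (Complex.ofReal_injective.ne hs)
    have hd : ((‖γ a - γ s‖ ^ 2 : ℝ) : ℂ) ≠ 0 :=
      Complex.ofReal_ne_zero.mpr (by linarith [Set.mem_Ioi.mp hd])
    simp only [Function.comp_apply, Pi.div_apply]
    generalize ‖γ a - γ s‖ ^ 2 = D at hd ⊢
    push_cast
    field_simp
    ring

theorem double_layer_kernel_continuous_extension_general
    (k : ℝ) (hk : 1/2 < k)
    (γ : ℝ → EuclideanSpace ℝ (Fin 3))
    (hγ : ContDiff ℝ 2 γ)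
    (harc : ∀ s : ℝ, ‖deriv γ s‖ = 1) :
    let ν : ℂ := (-1 + Complex.I * Real.sqrt (4*k^2 - 1)) / 2
    let Ck : ℂ := -1 / (4 * Complex.sin (ν * Real.pi))
    Tendsto
      (fun s : ℝ =>
        -Ck * deriv (fun x : ℝ => legendreP ν (x : ℂ)) (‖γ 0 - γ s‖^2 / 2 - 1)
          * ((inner ℝ (γ 0 - γ s) (cross3 (deriv γ s) (γ s)) : ℝ) : ℂ))
      (nhdsWithin 0 {(0 : ℝ)}ᶜ)
      (nhds (((-(1/(4*Real.pi)) *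
        (inner ℝ (deriv γ 0) (cross3 (deriv (deriv γ) 0) (γ 0)) : ℝ) : ℝ) : ℂ))) := by
  intro ν Ck
  have hν : ∀ m : ℤ, ν ≠ m := by
    have him : 0 < ν.im := by simpa [ν] using (by nlinarith : 0 < 4 * k ^ 2 - 1)
    exact fun m hm => by simp [hm] at him
  have hsin : Complex.sin (ν * Real.pi) ≠ 0 :=
    Complex.sin_ne_zero_iff.mpr fun m hm => hν m (by simpa using hm)
  have hlim := (tendsto_deriv_legendreP_mul_inner_sub_cross3 hν hγ (a := 0)
    (norm_ne_zero_iff.mp (by simp [harc]))).const_mul (-Ck)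
  simp only [harc, one_pow, div_one] at hlim
  convert hlim using 2
  · simp only [mul_assoc]
  · simp only [Ck]
    generalize Complex.sin (ν * Real.pi) = S at hsin ⊢
    push_cast
    field_simp

theorem double_layer_kernel_continuous_extension
    (k : ℝ) (hk : 1/2 < k)
    (γ : ℝ → EuclideanSpace ℝ (Fin 3))
    (hγ : ContDiff ℝ 2 γ)
    (hsphere : ∀ s : ℝ, ‖γ s‖ = 1)
    (harc : ∀ s : ℝ, ‖deriv γ s‖ = 1) :
    let ν : ℂ := (-1 + Complex.I * Real.sqrt (4*k^2 - 1)) / 2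
    let Ck : ℂ := -1 / (4 * Complex.sin (ν * Real.pi))
    Tendsto
      (fun s : ℝ =>
        -Ck * deriv (fun x : ℝ => legendreP ν (x : ℂ)) (‖γ 0 - γ s‖^2 / 2 - 1)
          * ((inner ℝ (γ 0 - γ s) (cross3 (deriv γ s) (γ s)) : ℝ) : ℂ))
      (nhdsWithin 0 {(0 : ℝ)}ᶜ)
      (nhds (((-(1/(4*Real.pi)) *
        (inner ℝ (deriv γ 0) (cross3 (deriv (deriv γ) 0) (γ 0)) : ℝ) : ℝ) : ℂ))) :=
  double_layer_kernel_continuous_extension_general k hk γ hγ harc
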